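/- Let C ⊆ ℂⁿ be a compact set and S ⊆ C a subset, and assume that through every point p ∈ C \ S there passes a nonconstant germ of a complex curve lying in C \ S. Let U ⊆ ℂⁿ be open with C ⊆ U, let f be holomorphic on U, and let p ∈ C satisfy |f(z)| ≤ |f(p)| for all z ∈ C and |f(q)| < |f(p)| for all q ∈ S. Then the level set K := {z ∈ C : f(z) = f(p)} is a nonempty compact set disjoint from S, and through every point of K there passes a nonconstant germ of a complex curve lying in K. -/

import Mathlib

/-! `K` is a closed subset of the compact `C`, and it misses `S` because `|f| < |f(p)|`
there. Through `q ∈ K` pass a germ `γ` in `C \ S`; then `|f ∘ γ|` attains its maximum `|f(p)|`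
at the centre of the disc, so by the maximum modulus principle `f ∘ γ ≡ f(p)` and `γ` lies in `K`. -/

/-- A nonconstant germ of a complex curve through `p` lying in `A ⊆ ℂⁿ`:
a map `γ : ℂ → ℂⁿ`, holomorphic on the open unit disc, with `γ 0 = p`,
image of the disc contained in `A`, and `γ` nonconstant on the disc. -/
def HasCurveGerm {n : ℕ} (A : Set (Fin n → ℂ)) (p : Fin n → ℂ) : Prop :=
  ∃ γ : ℂ → (Fin n → ℂ), DifferentiableOn ℂ γ (Metric.ball (0 : ℂ) 1) ∧ γ 0 = p ∧
    γ '' Metric.ball (0 : ℂ) 1 ⊆ A ∧ ∃ z ∈ Metric.ball (0 : ℂ) 1, γ z ≠ p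

open Metric Set

theorem ContinuousOn.isCompact_sep_eq {X Y : Type*} [TopologicalSpace X] [TopologicalSpace Y]
    [T1Space Y] {f : X → Y} {s : Set X} (hf : ContinuousOn f s) (hs : IsCompact s) (c : Y) :
    IsCompact {x ∈ s | f x = c} := by
  obtain ⟨u, hu, hfu⟩ := continuousOn_iff_isClosed.mp hf {c} isClosed_singleton
  have hsep : {x ∈ s | f x = c} = s ∩ u := by
    rw [inter_comm, ← hfu]
    ext x
    simp [and_comm]
  exact hsep ▸ hs.inter_right hu

theorem disjoint_sep_eq_of_norm_lt {X F : Type*} [Norm F] {f : X → F} {s t : Set X} {c : F}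
    (hlt : ∀ q ∈ t, ‖f q‖ < ‖c‖) : Disjoint {x ∈ s | f x = c} t :=
  disjoint_left.mpr fun q ⟨_, hq⟩ hqt => (hlt q hqt).ne (congrArg norm hq)

theorem HasCurveGerm.mono {n : ℕ} {A B : Set (Fin n → ℂ)} {q : Fin n → ℂ}
    (h : HasCurveGerm A q) (hAB : A ⊆ B) : HasCurveGerm B q :=
  let ⟨γ, hγ, hγ0, hγA, hne⟩ := h
  ⟨γ, hγ, hγ0, hγA.trans hAB, hne⟩

theorem HasCurveGerm.sep_eq_of_isMaxOn_norm {n : ℕ} {F : Type*} [NormedAddCommGroup F]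
    [NormedSpace ℂ F] [StrictConvexSpace ℝ F] {A : Set (Fin n → ℂ)} {q : Fin n → ℂ}
    {f : (Fin n → ℂ) → F} (h : HasCurveGerm A q) (hf : DifferentiableOn ℂ f A)
    (hmax : IsMaxOn (norm ∘ f) A q) : HasCurveGerm {z ∈ A | f z = f q} q := by
  obtain ⟨γ, hγ, hγ0, hγA, hne⟩ := h
  have hmaps : MapsTo γ (ball 0 1) A := fun w hw => hγA (mem_image_of_mem γ hw)
  have hmax_γ : IsMaxOn (norm ∘ f ∘ γ) (ball 0 1) 0 := fun w hw => by
    simpa [hγ0] using hmax (hmaps hw)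
  have hconst : EqOn (f ∘ γ) (Function.const ℂ (f q)) (ball 0 1) := by
    simpa [hγ0] using Complex.eqOn_of_isPreconnected_of_isMaxOn_norm
      (convex_ball 0 1).isPreconnected isOpen_ball (hf.comp hγ hmaps) (mem_ball_self one_pos)
      hmax_γ
  refine ⟨γ, hγ, hγ0, ?_, hne⟩
  rintro _ ⟨w, hw, rfl⟩
  exact ⟨hmaps hw, hconst hw⟩

theorem level_set_of_violation_curve_germs_general
    (n : ℕ) (C S : Set (Fin n → ℂ)) (hC : IsCompact C)
    (hgerm : ∀ p ∈ C \ S, HasCurveGerm (C \ S) p)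
    (U : Set (Fin n → ℂ)) (hCU : C ⊆ U)
    (f : (Fin n → ℂ) → ℂ) (hf : DifferentiableOn ℂ f U)
    (p : Fin n → ℂ) (hp : p ∈ C)
    (hmax : ∀ z ∈ C, ‖f z‖ ≤ ‖f p‖)
    (hstrict : ∀ q ∈ S, ‖f q‖ < ‖f p‖) :
    ({z ∈ C | f z = f p}).Nonempty ∧ IsCompact {z ∈ C | f z = f p} ∧
      Disjoint {z ∈ C | f z = f p} S ∧
      ∀ q ∈ {z ∈ C | f z = f p}, HasCurveGerm {z ∈ C | f z = f p} q := by
  have hdisj : Disjoint {z ∈ C | f z = f p} S := disjoint_sep_eq_of_norm_lt hstrict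
  refine ⟨⟨p, hp, rfl⟩, (hf.mono hCU).continuousOn.isCompact_sep_eq hC (f p), hdisj, ?_⟩
  rintro q hq
  have hqCS : q ∈ C \ S := ⟨hq.1, disjoint_left.mp hdisj hq⟩
  have hmax_q : IsMaxOn (norm ∘ f) (C \ S) q := fun z hz => by
    simpa [hq.2] using hmax z hz.1
  refine ((hgerm q hqCS).sep_eq_of_isMaxOn_norm (hf.mono (sdiff_subset.trans hCU)) hmax_q).mono ?_
  rintro z ⟨hz, hfz⟩
  exact ⟨hz.1, hfz.trans hq.2⟩

/-- First step of the proof of Proposition 2.6: from a hypothetical violation of the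
maximum modulus principle one extracts a nonempty compact level set `K`, disjoint
from `S`, through every point of which passes a nonconstant curve germ lying in `K`. -/
theorem level_set_of_violation_curve_germs
    (n : ℕ) (C S : Set (Fin n → ℂ)) (hC : IsCompact C) (hSC : S ⊆ C)
    (hgerm : ∀ p ∈ C \ S, HasCurveGerm (C \ S) p)
    (U : Set (Fin n → ℂ)) (hU : IsOpen U) (hCU : C ⊆ U)
    (f : (Fin n → ℂ) → ℂ) (hf : DifferentiableOn ℂ f U)
    (p : Fin n → ℂ) (hp : p ∈ C)
    (hmax : ∀ z ∈ C, ‖f z‖ ≤ ‖f p‖)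
    (hstrict : ∀ q ∈ S, ‖f q‖ < ‖f p‖) :
    ({z ∈ C | f z = f p}).Nonempty ∧ IsCompact {z ∈ C | f z = f p} ∧
      Disjoint {z ∈ C | f z = f p} S ∧
      ∀ q ∈ {z ∈ C | f z = f p}, HasCurveGerm {z ∈ C | f z = f p} q :=
  level_set_of_violation_curve_germs_general n C S hC hgerm U hCU f hf p hp hmax hstrict
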